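/- Let K ⊆ ℝ be compact with K ⊆ [c, 1] for some c > 0, and let N ≥ 1. For y = w₁⋯w_N with each w_j ∈ K, set z_j = w₁⋯w_j (z₀ = 1). Then for any bounded set A ⊆ ℝ of positive δ-covering number, and any t > 0: |t^{−1}A − yA|_δ ≲^N |t^{−1}A − A|_δ · ∏_{j=1}^N (|A − w_j A|_δ / |A|_δ), where the implied constant depends only on N and c. -/
import Mathlib


open scoped Pointwise
open Bornology Metric Set

/-- The minimal number of closed balls of radius `δ` needed to cover `A ⊆ ℝ`. -/
noncomputable def covN (δ : ℝ) (A : Set ℝ) : ℕ :=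
  sInf {n : ℕ | ∃ s : Finset ℝ, s.card = n ∧ A ⊆ ⋃ x ∈ s, Metric.closedBall x δ}

lemma covN_le_card {δ : ℝ} {A : Set ℝ} {s : Finset ℝ}
    (h : A ⊆ ⋃ x ∈ s, Metric.closedBall x δ) : covN δ A ≤ s.card :=
  Nat.sInf_le ⟨s, rfl, h⟩

lemma floor_div_eq {r u : ℝ} (hr : 0 < r) {a : ℤ} :
    ⌊u / r⌋ = a ↔ (a : ℝ) * r ≤ u ∧ u < (a + 1) * r := by
  rw [Int.floor_eq_iff, le_div_iff₀ hr, div_lt_iff₀ hr]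

lemma floor_div_mem {r u : ℝ} (hr : 0 < r) {a : ℤ}
    (h1 : (a : ℝ) * r ≤ u) (h2 : u < (a + 2) * r) :
    ⌊u / r⌋ = a ∨ ⌊u / r⌋ = a + 1 := by
  have hl : a ≤ ⌊u / r⌋ := Int.le_floor.2 (by rw [le_div_iff₀ hr]; exact h1)
  have hu : ⌊u / r⌋ < a + 2 := by
    rw [Int.floor_lt, div_lt_iff₀ hr]; push_cast; exact h2
  omega

lemma gridimg_finite {r : ℝ} (hr : 0 < r) {S : Set ℝ} (hS : IsBounded S) :
    ((fun x => ⌊x / r⌋) '' S).Finite := by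
  obtain ⟨M, hM⟩ := hS.subset_closedBall 0
  apply (Set.finite_Icc ⌊(-M) / r⌋ ⌊M / r⌋).subset
  rintro k ⟨x, hx, rfl⟩
  have := hM hx
  rw [Metric.mem_closedBall, Real.dist_eq, sub_zero, abs_le] at this
  constructor <;> apply Int.floor_le_floor <;> gcongr
  exacts [this.1, this.2]

/-- The explicit grid cover: `A` is covered by balls centered at cell centers. -/
lemma grid_cover {δ : ℝ} (hδ : 0 < δ) {A : Set ℝ} (hA : IsBounded A) :
    A ⊆ ⋃ x ∈ ((gridimg_finite (by linarith : (0:ℝ) < 2*δ) hA).toFinset.image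
      (fun k : ℤ => 2*δ*k + δ)), Metric.closedBall x δ := by
  intro x hx
  have h2δ : (0:ℝ) < 2*δ := by linarith
  set k := ⌊x / (2*δ)⌋ with hk
  have hmem : (k : ℤ) ∈ (gridimg_finite h2δ hA).toFinset := by
    simp only [Set.Finite.mem_toFinset]; exact ⟨x, hx, rfl⟩
  have hkx : (k:ℝ) * (2*δ) ≤ x ∧ x < ((k:ℝ) + 1) * (2*δ) := (floor_div_eq h2δ).1 rfl
  refine Set.mem_iUnion₂.2 ⟨2*δ*k + δ, Finset.mem_image.2 ⟨k, hmem, rfl⟩, ?_⟩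
  rw [Metric.mem_closedBall, Real.dist_eq, abs_le]
  constructor <;> nlinarith [hkx.1, hkx.2]

lemma exists_cover {δ : ℝ} (hδ : 0 < δ) {A : Set ℝ} (hA : IsBounded A) :
    ∃ s : Finset ℝ, s.card = covN δ A ∧ A ⊆ ⋃ x ∈ s, Metric.closedBall x δ :=
by
  have hne : {n : ℕ | ∃ s : Finset ℝ, s.card = n ∧ A ⊆ ⋃ x ∈ s, Metric.closedBall x δ}.Nonempty :=
    ⟨_, _, rfl, grid_cover hδ hA⟩
  obtain ⟨s, hcard, hcov⟩ := Nat.sInf_mem hne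
  exact ⟨s, hcard, hcov⟩

lemma covN_le_Q {δ : ℝ} (hδ : 0 < δ) {A : Set ℝ} (hA : IsBounded A) :
    covN δ A ≤ ((fun x => ⌊x / (2*δ)⌋) '' A).ncard := by
  refine (covN_le_card (grid_cover hδ hA)).trans ?_
  refine Finset.card_image_le.trans ?_
  rw [Set.ncard_eq_toFinset_card _ (gridimg_finite (by linarith : (0:ℝ) < 2*δ) hA)]

lemma Q_le_two_covN {δ : ℝ} (hδ : 0 < δ) {S : Set ℝ} (hS : IsBounded S) :
    ((fun x => ⌊x / (2*δ)⌋) '' S).ncard ≤ 2 * covN δ S := by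
  have h2δ : (0:ℝ) < 2*δ := by linarith
  obtain ⟨s, hcard, hcov⟩ := exists_cover hδ hS
  have hsub : (gridimg_finite h2δ hS).toFinset ⊆
      s.image (fun x => ⌊(x - δ)/(2*δ)⌋) ∪ s.image (fun x => ⌊(x - δ)/(2*δ)⌋ + 1) := by
    intro k hk
    rw [Set.Finite.mem_toFinset] at hk
    obtain ⟨u, hu, rfl⟩ := hk
    obtain ⟨x, hx, hux⟩ := Set.mem_iUnion₂.1 (hcov hu)
    rw [Metric.mem_closedBall, Real.dist_eq, abs_le] at hux
    set a := ⌊(x - δ)/(2*δ)⌋ with ha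
    have haf : (a:ℝ) * (2*δ) ≤ x - δ ∧ x - δ < ((a:ℝ) + 1) * (2*δ) := (floor_div_eq h2δ).1 rfl
    have : ⌊u / (2*δ)⌋ = a ∨ ⌊u / (2*δ)⌋ = a + 1 := by
      apply floor_div_mem h2δ
      · nlinarith [haf.1, hux.1]
      · nlinarith [haf.2, hux.2]
    rw [Finset.mem_union]
    rcases this with h | h
    · exact Or.inl (Finset.mem_image.2 ⟨x, hx, h.symm⟩)
    · exact Or.inr (Finset.mem_image.2 ⟨x, hx, h.symm⟩)
  calc ((fun x => ⌊x / (2*δ)⌋) '' S).ncard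
      = (gridimg_finite h2δ hS).toFinset.card := Set.ncard_eq_toFinset_card _ _
    _ ≤ _ := Finset.card_le_card hsub
    _ ≤ _ := Finset.card_union_le _ _
    _ ≤ s.card + s.card := by
        gcongr <;> exact Finset.card_image_le
    _ = 2 * covN δ S := by rw [hcard]; ring

lemma covN_image_le {δ : ℝ} (hδ : 0 < δ) {S : Set ℝ} (hS : IsBounded S)
    (f : ℝ → ℝ) (hf : ∀ a b, dist (f a) (f b) ≤ dist a b) :
    covN δ (f '' S) ≤ covN δ S := by
  obtain ⟨s, hcard, hcov⟩ := exists_cover hδ hS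
  rw [← hcard]
  refine (covN_le_card (s := s.image f) ?_).trans Finset.card_image_le
  rintro y ⟨u, hu, rfl⟩
  obtain ⟨x, hx, hux⟩ := Set.mem_iUnion₂.1 (hcov hu)
  exact Set.mem_iUnion₂.2 ⟨f x, Finset.mem_image.2 ⟨x, hx, rfl⟩,
    (hf u x).trans hux⟩

lemma covN_smul_le {δ : ℝ} (hδ : 0 < δ) {S : Set ℝ} (hS : IsBounded S)
    {z : ℝ} (hz0 : 0 ≤ z) (hz1 : z ≤ 1) :
    covN δ (z • S) ≤ covN δ S := by
  have : z • S = (fun x => z * x) '' S := rfl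
  rw [this]
  apply covN_image_le hδ hS
  intro a b
  rw [Real.dist_eq, Real.dist_eq, ← mul_sub, abs_mul, abs_of_nonneg hz0]
  nlinarith [abs_nonneg (a - b)]

lemma ball_subdiv {δ ρ y : ℝ} (hδ : 0 < δ) (hρ : 0 ≤ ρ) (m : ℕ) (hm1 : 1 ≤ m)
    (hm : ρ ≤ m * δ) :
    Metric.closedBall y ρ ⊆
      ⋃ i ∈ Finset.range m, Metric.closedBall (y - ρ + (2*(i:ℝ)+1)*δ) δ := by
  intro x hx
  rw [Metric.mem_closedBall, Real.dist_eq, abs_le] at hx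
  set u := x - (y - ρ) with hu
  have hu0 : 0 ≤ u := by simp only [hu]; linarith [hx.1]
  have hu2 : u ≤ 2 * ρ := by simp only [hu]; linarith [hx.2]
  set i : ℕ := min (m - 1) ⌊u / (2*δ)⌋₊ with hi
  have h2δ : (0:ℝ) < 2*δ := by linarith
  have hkey : 2*δ*(i:ℝ) ≤ u ∧ u ≤ 2*δ*((i:ℝ)+1) := by
    rcases le_or_gt ⌊u / (2*δ)⌋₊ (m-1) with h | h
    · have hie : i = ⌊u / (2*δ)⌋₊ := by omega
      rw [hie]
      constructor
      · have := Nat.floor_le (by positivity : 0 ≤ u / (2*δ))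
        rw [le_div_iff₀ h2δ] at this; linarith
      · have := Nat.lt_floor_add_one (u / (2*δ))
        rw [div_lt_iff₀ h2δ] at this; push_cast at this ⊢; linarith
    · have hie : i = m - 1 := by omega
      have h1 : (m:ℝ) ≤ ⌊u / (2*δ)⌋₊ := by exact_mod_cast Nat.le_of_lt_succ (by omega)
      have h2 : (⌊u / (2*δ)⌋₊ : ℝ) ≤ u / (2*δ) := Nat.floor_le (by positivity)
      rw [le_div_iff₀ h2δ] at h2
      have him : ((i:ℝ)) = (m:ℝ) - 1 := by rw [hie]; push_cast [hm1]; ring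
      constructor
      · rw [him]; nlinarith
      · rw [him]; nlinarith
  refine Set.mem_iUnion₂.2 ⟨i, Finset.mem_range.2 (by omega), ?_⟩
  rw [Metric.mem_closedBall, Real.dist_eq, abs_le]
  constructor
  · have : x - (y - ρ + (2*(i:ℝ)+1)*δ) = u - (2*(i:ℝ)+1)*δ := by rw [hu]; ring
    rw [this]; linarith [hkey.1]
  · have : x - (y - ρ + (2*(i:ℝ)+1)*δ) = u - (2*(i:ℝ)+1)*δ := by rw [hu]; ring
    rw [this]; linarith [hkey.2]

lemma covN_le_nmul_smul {δ : ℝ} (hδ : 0 < δ) {S : Set ℝ} (hS : IsBounded S)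
    {c₀ z : ℝ} (hc₀ : 0 < c₀) (hz : c₀ ≤ z) (hz1 : z ≤ 1) :
    covN δ S ≤ ⌈1/c₀⌉₊ * covN δ (z • S) := by
  have hz0 : 0 < z := lt_of_lt_of_le hc₀ hz
  set m := ⌈1/c₀⌉₊ with hmdef
  have hm1 : 1 ≤ m := Nat.one_le_ceil_iff.2 (by positivity)
  have hρ : (0:ℝ) ≤ δ/c₀ := by positivity
  have hmδ : δ/c₀ ≤ m * δ := by
    have : 1/c₀ ≤ (m:ℝ) := Nat.le_ceil _
    calc δ/c₀ = (1/c₀) * δ := by ring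
      _ ≤ m * δ := by nlinarith
  obtain ⟨s, hcard, hcov⟩ := exists_cover hδ (hS.smul₀ z)
  have hcov' : S ⊆ ⋃ p ∈ s ×ˢ Finset.range m,
      Metric.closedBall (p.1/z - δ/c₀ + (2*(p.2:ℝ)+1)*δ) δ := by
    intro u hu
    have : z * u ∈ z • S := ⟨u, hu, rfl⟩
    obtain ⟨x, hx, hux⟩ := Set.mem_iUnion₂.1 (hcov this)
    rw [Metric.mem_closedBall, Real.dist_eq] at hux
    have hub : u ∈ Metric.closedBall (x/z) (δ/c₀) := by
      rw [Metric.mem_closedBall, Real.dist_eq]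
      have h1 : u - x/z = (z*u - x)/z := by field_simp
      rw [h1, abs_div, abs_of_pos hz0]
      calc |z*u - x| / z ≤ δ / z := by gcongr
        _ ≤ δ / c₀ := by gcongr
    have := ball_subdiv hδ hρ m hm1 hmδ hub
    obtain ⟨i, hi, hui⟩ := Set.mem_iUnion₂.1 this
    exact Set.mem_iUnion₂.2 ⟨(x, i), Finset.mem_product.2 ⟨hx, hi⟩, hui⟩
  calc covN δ S ≤ ((s ×ˢ Finset.range m).image
        (fun p : ℝ × ℕ => p.1/z - δ/c₀ + (2*(p.2:ℝ)+1)*δ)).card := covN_le_card (by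
          intro u hu
          obtain ⟨p, hp, hup⟩ := Set.mem_iUnion₂.1 (hcov' hu)
          exact Set.mem_iUnion₂.2 ⟨_, Finset.mem_image.2 ⟨p, hp, rfl⟩, hup⟩)
    _ ≤ (s ×ˢ Finset.range m).card := Finset.card_image_le
    _ = s.card * m := by rw [Finset.card_product, Finset.card_range]
    _ = m * covN δ (z • S) := by rw [hcard]; ring

lemma ruzsa_Q {r : ℝ} (hr : 0 < r) {X Y Z : Set ℝ}
    (hX : IsBounded X) (hY : IsBounded Y) (hZ : IsBounded Z) :
    ((fun x => ⌊x / r⌋) '' (X - Y)).ncard * ((fun x => ⌊x / r⌋) '' Z).ncard ≤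
      4 * (((fun x => ⌊x / r⌋) '' (X - Z)).ncard * ((fun x => ⌊x / r⌋) '' (Z - Y)).ncard) := by
  have hXY := gridimg_finite hr (hX.sub hY)
  have hZ' := gridimg_finite hr hZ
  have hXZ := gridimg_finite hr (hX.sub hZ)
  have hZY := gridimg_finite hr (hZ.sub hY)
  set sXY := hXY.toFinset
  set sZ := hZ'.toFinset
  set sXZ := hXZ.toFinset
  set sZY := hZY.toFinset
  -- choice of representatives
  have hch1 : ∀ k : ℤ, ∃ q : ℝ × ℝ, k ∈ sXY →
      q.1 ∈ X ∧ q.2 ∈ Y ∧ ⌊(q.1 - q.2) / r⌋ = k := by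
    intro k
    by_cases h : k ∈ sXY
    · rw [Set.Finite.mem_toFinset] at h
      obtain ⟨d, hd, hf⟩ := h
      rw [Set.mem_sub] at hd
      obtain ⟨x, hx, y, hy, hxy⟩ := hd
      exact ⟨(x, y), fun _ => ⟨hx, hy, by rw [hxy]; exact hf⟩⟩
    · exact ⟨(0, 0), fun h' => absurd h' h⟩
  choose p hp using hch1
  have hch2 : ∀ l : ℤ, ∃ v : ℝ, l ∈ sZ → v ∈ Z ∧ ⌊v / r⌋ = l := by
    intro l
    by_cases h : l ∈ sZ
    · rw [Set.Finite.mem_toFinset] at h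
      obtain ⟨v, hv, hf⟩ := h
      exact ⟨v, fun _ => ⟨hv, hf⟩⟩
    · exact ⟨0, fun h' => absurd h' h⟩
  choose zc hzc using hch2
  set F : ℤ × ℤ → (ℤ × ℤ) × (ℤ × ℤ) := fun q =>
    ((⌊((p q.1).1 - zc q.2) / r⌋, ⌊(zc q.2 - (p q.1).2) / r⌋),
     (q.1 - (⌊((p q.1).1 - zc q.2) / r⌋ + ⌊(zc q.2 - (p q.1).2) / r⌋),
      q.2 - (⌊(zc q.2 - (p q.1).2) / r⌋ + ⌊(p q.1).2 / r⌋))) with hF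
  have key : ∀ q ∈ sXY ×ˢ sZ,
      (q.1 - (⌊((p q.1).1 - zc q.2) / r⌋ + ⌊(zc q.2 - (p q.1).2) / r⌋) = 0 ∨
       q.1 - (⌊((p q.1).1 - zc q.2) / r⌋ + ⌊(zc q.2 - (p q.1).2) / r⌋) = 1) ∧
      (q.2 - (⌊(zc q.2 - (p q.1).2) / r⌋ + ⌊(p q.1).2 / r⌋) = 0 ∨
       q.2 - (⌊(zc q.2 - (p q.1).2) / r⌋ + ⌊(p q.1).2 / r⌋) = 1) := by
    rintro ⟨k, l⟩ hq
    rw [Finset.mem_product] at hq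
    obtain ⟨hx, hy, hfk⟩ := hp k hq.1
    obtain ⟨hzl, hfl⟩ := hzc l hq.2
    set x := (p (k, l).1).1
    set y := (p (k, l).1).2
    set v := zc (k, l).2
    set a := ⌊(x - v) / r⌋ with hadef
    set b := ⌊(v - y) / r⌋ with hbdef
    set c := ⌊y / r⌋ with hcdef
    have ha := (floor_div_eq hr).1 hadef.symm
    have hb := (floor_div_eq hr).1 hbdef.symm
    have hc := (floor_div_eq hr).1 hcdef.symm
    constructor
    · have : ⌊(x - y) / r⌋ = a + b ∨ ⌊(x - y) / r⌋ = a + b + 1 := by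
        apply floor_div_mem hr
        · push_cast; nlinarith [ha.1, hb.1]
        · push_cast; nlinarith [ha.2, hb.2]
      rw [hfk] at this
      omega
    · have : ⌊v / r⌋ = b + c ∨ ⌊v / r⌋ = b + c + 1 := by
        apply floor_div_mem hr
        · push_cast; nlinarith [hb.1, hc.1]
        · push_cast; nlinarith [hb.2, hc.2]
      rw [hfl] at this
      omega
  have hcount : (sXY ×ˢ sZ).card ≤ ((sXZ ×ˢ sZY) ×ˢ
      (({0, 1} : Finset ℤ) ×ˢ ({0, 1} : Finset ℤ))).card := by
    apply Finset.card_le_card_of_injOn F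
    · rintro ⟨k, l⟩ hq
      have hk := (Finset.mem_product.1 hq).1
      have hl := (Finset.mem_product.1 hq).2
      obtain ⟨hx, hy, hfk⟩ := hp k hk
      obtain ⟨hzl, hfl⟩ := hzc l hl
      obtain ⟨h1, h2⟩ := key (k, l) hq
      dsimp only at h1 h2 ⊢
      refine Finset.mem_product.2 ⟨Finset.mem_product.2 ⟨?_, ?_⟩,
        Finset.mem_product.2 ⟨?_, ?_⟩⟩
      · rw [Set.Finite.mem_toFinset]
        exact ⟨(p (k,l).1).1 - zc (k,l).2, Set.sub_mem_sub hx hzl, rfl⟩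
      · rw [Set.Finite.mem_toFinset]
        exact ⟨zc (k,l).2 - (p (k,l).1).2, Set.sub_mem_sub hzl hy, rfl⟩
      · simp only [Finset.mem_insert, Finset.mem_singleton]; omega
      · simp only [Finset.mem_insert, Finset.mem_singleton]; omega
    · rintro ⟨k, l⟩ hq ⟨k', l'⟩ hq' hFF
      rw [Finset.mem_coe] at hq hq'
      have e1 := congrArg (fun w => w.1.1) hFF
      have e2 := congrArg (fun w => w.1.2) hFF
      have e3 := congrArg (fun w => w.2.1) hFF
      have e4 := congrArg (fun w => w.2.2) hFF
      simp only [hF] at e1 e2 e3 e4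
      have hkk : k = k' := by omega
      subst hkk
      have hll : l = l' := by omega
      subst hll
      rfl
  have c1 : ((fun x => ⌊x / r⌋) '' (X - Y)).ncard = sXY.card :=
    Set.ncard_eq_toFinset_card _ _
  have c2 : ((fun x => ⌊x / r⌋) '' Z).ncard = sZ.card :=
    Set.ncard_eq_toFinset_card _ _
  have c3 : ((fun x => ⌊x / r⌋) '' (X - Z)).ncard = sXZ.card :=
    Set.ncard_eq_toFinset_card _ _
  have c4 : ((fun x => ⌊x / r⌋) '' (Z - Y)).ncard = sZY.card :=
    Set.ncard_eq_toFinset_card _ _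
  rw [c1, c2, c3, c4]
  calc sXY.card * sZ.card = (sXY ×ˢ sZ).card := (Finset.card_product _ _).symm
    _ ≤ _ := hcount
    _ = sXZ.card * sZY.card * (({0,1} : Finset ℤ).card * ({0,1} : Finset ℤ).card) := by
        rw [Finset.card_product, Finset.card_product, Finset.card_product]
    _ ≤ 4 * (sXZ.card * sZY.card) := by
        have : ({0,1} : Finset ℤ).card = 2 := by decide
        rw [this]; ring_nf; omega

lemma smul_set_sub' (z : ℝ) (S T : Set ℝ) : z • (S - T) = z • S - z • T := by
  ext x
  simp only [Set.mem_smul_set, Set.mem_sub]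
  constructor
  · rintro ⟨d, ⟨s, hs, t, ht, rfl⟩, rfl⟩
    exact ⟨z * s, ⟨s, hs, rfl⟩, z * t, ⟨t, ht, rfl⟩, by simp [smul_eq_mul]; ring⟩
  · rintro ⟨s', ⟨s, hs, rfl⟩, t', ⟨t, ht, rfl⟩, rfl⟩
    exact ⟨s - t, ⟨s, hs, t, ht, rfl⟩, by simp [smul_eq_mul]; ring⟩

lemma step_lemma {δ : ℝ} (hδ : 0 < δ) {c₀ z w : ℝ} (hc₀ : 0 < c₀) (hz : c₀ ≤ z)
    (hz1 : z ≤ 1) (hw0 : 0 ≤ w) (hw1 : w ≤ 1) {B A : Set ℝ}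
    (hB : IsBounded B) (hA : IsBounded A) :
    covN δ (B - (z * w) • A) * covN δ A ≤
      16 * ⌈1/c₀⌉₊ * (covN δ (B - z • A) * covN δ (A - w • A)) := by
  have hz0 : 0 < z := lt_of_lt_of_le hc₀ hz
  have h2δ : (0:ℝ) < 2*δ := by linarith
  set m := ⌈1/c₀⌉₊ with hm
  set q : Set ℝ → ℕ := fun S => ((fun x => ⌊x / (2*δ)⌋) '' S).ncard with hq
  have hbzw : IsBounded (B - (z*w) • A) := hB.sub (hA.smul₀ _)
  have hbz : IsBounded (B - z • A) := hB.sub (hA.smul₀ _)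
  have hzA : IsBounded (z • A) := hA.smul₀ _
  have hAw : IsBounded (A - w • A) := hA.sub (hA.smul₀ _)
  have hid : z • A - (z*w) • A = z • (A - w • A) := by
    rw [smul_set_sub', mul_smul]
  have h1 : covN δ (B - (z*w) • A) ≤ q (B - (z*w) • A) := covN_le_Q hδ hbzw
  have h2 : covN δ A ≤ m * covN δ (z • A) := covN_le_nmul_smul hδ hA hc₀ hz hz1
  have h3 : covN δ (z • A) ≤ q (z • A) := covN_le_Q hδ hzA
  have h4 : q (B - (z*w) • A) * q (z • A) ≤
      4 * (q (B - z • A) * q (z • A - (z*w) • A)) := ruzsa_Q h2δ hB (hA.smul₀ _) hzA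
  have h5 : q (B - z • A) ≤ 2 * covN δ (B - z • A) := Q_le_two_covN hδ hbz
  have h6 : q (z • A - (z*w) • A) ≤ 2 * covN δ (A - w • A) := by
    rw [hid]
    refine (Q_le_two_covN hδ (hAw.smul₀ _)).trans ?_
    have := covN_smul_le hδ hAw (le_of_lt hz0) hz1
    omega
  calc covN δ (B - (z*w) • A) * covN δ A
      ≤ q (B - (z*w) • A) * (m * q (z • A)) :=
        Nat.mul_le_mul h1 (h2.trans (Nat.mul_le_mul_left m h3))
    _ = m * (q (B - (z*w) • A) * q (z • A)) := by ring
    _ ≤ m * (4 * (q (B - z • A) * q (z • A - (z*w) • A))) := Nat.mul_le_mul_left _ h4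
    _ ≤ m * (4 * ((2 * covN δ (B - z • A)) * (2 * covN δ (A - w • A)))) := by
        apply Nat.mul_le_mul_left
        apply Nat.mul_le_mul_left
        exact Nat.mul_le_mul h5 h6
    _ = 16 * m * (covN δ (B - z • A) * covN δ (A - w • A)) := by ring

/-- Iterated Ruzsa triangle inequality along the chain `z_j = w₁⋯w_j`: for `K ⊆ [c,1]`
compact, `w_j ∈ K`, `y = w₁⋯w_N`, any bounded `A ⊆ ℝ` of positive δ-covering number and
`t > 0`,
`|t⁻¹A − yA|_δ ⋅ |A|_δ^N ≤ C ⋅ |t⁻¹A − A|_δ ⋅ ∏_j |A − w_j A|_δ`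
with `C` depending only on `N` and `c`. -/
theorem chain_triangle_inequality (N : ℕ) (hN : 1 ≤ N) (c : ℝ) (hc : 0 < c) :
    ∃ C : ℝ, 0 < C ∧ ∀ K : Set ℝ, IsCompact K → K ⊆ Set.Icc c 1 →
      ∀ w : Fin N → ℝ, (∀ j, w j ∈ K) →
      ∀ A : Set ℝ, Bornology.IsBounded A → ∀ δ t : ℝ, 0 < δ → 0 < t →
        0 < covN δ A →
        (covN δ (t⁻¹ • A - (∏ j, w j) • A) : ℝ) * (covN δ A : ℝ) ^ N ≤
          C * (covN δ (t⁻¹ • A - A) : ℝ) * ∏ j, (covN δ (A - w j • A) : ℝ) := by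
  set m := ⌈1 / c ^ N⌉₊ with hmdef
  have hcN : (0:ℝ) < c ^ N := by positivity
  have hm1 : 1 ≤ m := Nat.one_le_ceil_iff.2 (by positivity)
  refine ⟨((16 * m : ℕ) : ℝ) ^ N, by positivity, ?_⟩
  intro K _hK hKsub w hwK A hA δ t hδ ht _hpos
  have hwmem : ∀ j, c ≤ w j ∧ w j ≤ 1 := fun j => ⟨(hKsub (hwK j)).1, (hKsub (hwK j)).2⟩
  have hc1 : c ≤ 1 := le_trans (hwmem ⟨0, hN⟩).1 (hwmem ⟨0, hN⟩).2
  set v : ℕ → ℝ := fun i => if h : i < N then w ⟨i, h⟩ else 1 with hvdef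
  have hv0 : ∀ i, 0 < v i := by
    intro i; by_cases h : i < N
    · simp only [hvdef, dif_pos h]; exact lt_of_lt_of_le hc (hwmem _).1
    · simp only [hvdef, dif_neg h]; norm_num
  have hv1 : ∀ i, v i ≤ 1 := by
    intro i; by_cases h : i < N
    · simp only [hvdef, dif_pos h]; exact (hwmem _).2
    · simp only [hvdef, dif_neg h]; norm_num
  have hvc : ∀ i, i < N → c ≤ v i := by
    intro i h; simp only [hvdef, dif_pos h]; exact (hwmem _).1
  set B := t⁻¹ • A with hBdef
  have hB : IsBounded B := hA.smul₀ _
  -- main induction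
  have main : ∀ j, j ≤ N →
      (covN δ (B - (∏ i ∈ Finset.range j, v i) • A) : ℝ) * (covN δ A : ℝ) ^ j ≤
        ((16 * m : ℕ) : ℝ) ^ j *
          ((covN δ (B - A) : ℝ) * ∏ i ∈ Finset.range j, (covN δ (A - v i • A) : ℝ)) := by
    intro j
    induction j with
    | zero => intro _; simp
    | succ j ih =>
      intro hjN
      have hjN' : j ≤ N := by omega
      have IH := ih hjN'
      set P := ∏ i ∈ Finset.range j, v i with hPdef
      have hP1 : P ≤ 1 := Finset.prod_le_one
        (fun i _ => le_of_lt (hv0 i)) (fun i _ => hv1 i)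
      have hPc : c ^ N ≤ P := by
        have h1 : c ^ N ≤ c ^ j := pow_le_pow_of_le_one (le_of_lt hc) hc1 hjN'
        have h2 : c ^ j ≤ P := by
          have : c ^ j = ∏ _i ∈ Finset.range j, c := by
            rw [Finset.prod_const, Finset.card_range]
          rw [this, hPdef]
          exact Finset.prod_le_prod (fun i _ => le_of_lt hc)
            (fun i hi => hvc i (lt_of_lt_of_le (Finset.mem_range.1 hi) hjN'))
        linarith
      have hstep := step_lemma hδ hcN hPc hP1 (le_of_lt (hv0 j)) (hv1 j) hB hA
        (c₀ := c ^ N) (z := P) (w := v j)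
      rw [← hmdef] at hstep
      have hstepR : (covN δ (B - (P * v j) • A) : ℝ) * (covN δ A : ℝ) ≤
          (16 * m : ℕ) * ((covN δ (B - P • A) : ℝ) * (covN δ (A - v j • A) : ℝ)) := by
        exact_mod_cast hstep
      have hprod : ∏ i ∈ Finset.range (j+1), v i = P * v j := by
        rw [Finset.prod_range_succ]
      rw [hprod, Finset.prod_range_succ]
      have hnn1 : (0:ℝ) ≤ (covN δ (A - v j • A) : ℝ) := Nat.cast_nonneg _
      have hnn2 : (0:ℝ) ≤ (covN δ A : ℝ) ^ j := by positivity
      have hnn3 : (0:ℝ) ≤ ((16 * m : ℕ) : ℝ) := Nat.cast_nonneg _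
      calc (covN δ (B - (P * v j) • A) : ℝ) * (covN δ A : ℝ) ^ (j+1)
          = ((covN δ (B - (P * v j) • A) : ℝ) * (covN δ A : ℝ)) * (covN δ A : ℝ) ^ j := by
            ring
        _ ≤ ((16 * m : ℕ) * ((covN δ (B - P • A) : ℝ) * (covN δ (A - v j • A) : ℝ))) *
              (covN δ A : ℝ) ^ j := by
            apply mul_le_mul_of_nonneg_right hstepR hnn2
        _ = ((16 * m : ℕ) : ℝ) * (covN δ (A - v j • A) : ℝ) *
              ((covN δ (B - P • A) : ℝ) * (covN δ A : ℝ) ^ j) := by ring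
        _ ≤ ((16 * m : ℕ) : ℝ) * (covN δ (A - v j • A) : ℝ) *
              (((16 * m : ℕ) : ℝ) ^ j *
                ((covN δ (B - A) : ℝ) * ∏ i ∈ Finset.range j, (covN δ (A - v i • A) : ℝ))) := by
            apply mul_le_mul_of_nonneg_left IH (by positivity)
        _ = ((16 * m : ℕ) : ℝ) ^ (j+1) *
              ((covN δ (B - A) : ℝ) *
                ((∏ i ∈ Finset.range j, (covN δ (A - v i • A) : ℝ)) *
                  (covN δ (A - v j • A) : ℝ))) := by ring
  have hfin := main N le_rfl
  have hwv : ∏ i ∈ Finset.range N, v i = ∏ j, w j := by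
    rw [← Fin.prod_univ_eq_prod_range]
    apply Finset.prod_congr rfl
    intro j _
    simp only [hvdef, dif_pos j.isLt]
  have hcv : ∏ i ∈ Finset.range N, (covN δ (A - v i • A) : ℝ) =
      ∏ j, (covN δ (A - w j • A) : ℝ) := by
    rw [← Fin.prod_univ_eq_prod_range]
    apply Finset.prod_congr rfl
    intro j _
    simp only [hvdef, dif_pos j.isLt]
  rw [hwv, hcv] at hfin
  calc (covN δ (t⁻¹ • A - (∏ j, w j) • A) : ℝ) * (covN δ A : ℝ) ^ N
      ≤ ((16 * m : ℕ) : ℝ) ^ N *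
        ((covN δ (t⁻¹ • A - A) : ℝ) * ∏ j, (covN δ (A - w j • A) : ℝ)) := hfin
    _ = ((16 * m : ℕ) : ℝ) ^ N * (covN δ (t⁻¹ • A - A) : ℝ) *
        ∏ j, (covN δ (A - w j • A) : ℝ) := by ring
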